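/- (3-Associativity for (F,Η)) Let F be an r-sort species admitting a composition operator Η. For pairwise componentwise-disjoint r-tuples Ω1, Ω2, Ω3 of finite sets, one has η(η(F[Ω1] × F[Ω2]) × F[Ω3]) = η(F[Ω1] × η(F[Ω2] × F[Ω3])) as subsets of F[Ω1⨿Ω2⨿Ω3]. -/

import Mathlib

open scoped Classical

noncomputable section

/-- Objects of `Set^r`: `r`-tuples of finite sets (realized as finite subsets of `ℕ`). -/
abbrev Obj (r : ℕ) := Fin r → Finset ℕ

variable {r : ℕ}

/-- The `r`-tuple of empty sets. -/
def oEmpty (r : ℕ) : Obj r := fun _ => ∅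

/-- Componentwise union (the disjoint union `⨿` when the arguments are
componentwise disjoint). -/
def oUnion (Ω₁ Ω₂ : Obj r) : Obj r := fun i => Ω₁ i ∪ Ω₂ i

/-- Componentwise intersection. -/
def oInter (Ω₁ Ω₂ : Obj r) : Obj r := fun i => Ω₁ i ∩ Ω₂ i

/-- Componentwise set difference. -/
def oDiff (Ω₁ Ω₂ : Obj r) : Obj r := fun i => Ω₁ i \ Ω₂ i

/-- Componentwise disjointness. -/
def oDisj (Ω₁ Ω₂ : Obj r) : Prop := ∀ i, Disjoint (Ω₁ i) (Ω₂ i)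

/-- Componentwise containment. -/
def oSub (Ω₁ Ω₂ : Obj r) : Prop := ∀ i, Ω₁ i ⊆ Ω₂ i

/-- A morphism of `Set^r`: an `r`-tuple of bijections between the components. -/
def Mor (Ω₁ Ω₂ : Obj r) : Type := ∀ i, {x // x ∈ Ω₁ i} ≃ {x // x ∈ Ω₂ i}

/-- The identity morphism. -/
def idMor (Ω : Obj r) : Mor Ω Ω := fun _ => Equiv.refl _

/-- Composition of morphisms. -/
def compMor {Ω₁ Ω₂ Ω₃ : Obj r} (f : Mor Ω₁ Ω₂) (g : Mor Ω₂ Ω₃) : Mor Ω₁ Ω₃ :=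
  fun i => (f i).trans (g i)

/-- An `r`-sort species: a (covariant) functor from `Set^r` to the category of
finite sets and bijections.  The value `F[Ω]` is the finite set `obj Ω`, and the
action on a morphism `f` is encoded by the function `map f : ℕ → ℕ` (only its
values on `obj Ω₁` are relevant). -/
structure Species (r : ℕ) where
  obj : Obj r → Finset ℕ
  map : ∀ {Ω₁ Ω₂ : Obj r}, Mor Ω₁ Ω₂ → ℕ → ℕ
  map_mem : ∀ {Ω₁ Ω₂ : Obj r} (f : Mor Ω₁ Ω₂), ∀ x ∈ obj Ω₁, map f x ∈ obj Ω₂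
  map_id : ∀ (Ω : Obj r), ∀ x ∈ obj Ω, map (idMor Ω) x = x
  map_comp : ∀ {Ω₁ Ω₂ Ω₃ : Obj r} (f : Mor Ω₁ Ω₂) (g : Mor Ω₂ Ω₃), ∀ x ∈ obj Ω₁,
    map (compMor f g) x = map g (map f x)

/-- The canonical identification of a disjoint union `s ∪ t` with the sum `s ⊕ t`. -/
def finsetSumEquiv {s t : Finset ℕ} (h : Disjoint s t) :
    {x // x ∈ s ∪ t} ≃ {x // x ∈ s} ⊕ {x // x ∈ t} :=
  (Equiv.subtypeEquivRight (fun x => by simp)).trans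
    (Equiv.Set.union (s := (↑s : Set ℕ)) (t := (↑t : Set ℕ)) (by exact_mod_cast h))

/-- The disjoint union of two bijections, as a bijection between unions. -/
def finsetUnionEquiv {s t s' t' : Finset ℕ} (h : Disjoint s t) (h' : Disjoint s' t')
    (f : {x // x ∈ s} ≃ {x // x ∈ s'}) (g : {x // x ∈ t} ≃ {x // x ∈ t'}) :
    {x // x ∈ s ∪ t} ≃ {x // x ∈ s' ∪ t'} :=
  (finsetSumEquiv h).trans ((f.sumCongr g).trans (finsetSumEquiv h').symm)

/-- The disjoint union `f ⨿ g` of two morphisms of `Set^r`. -/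
def morUnion {Ω₁ Ω₂ Ω₁' Ω₂' : Obj r} (h : oDisj Ω₁ Ω₂) (h' : oDisj Ω₁' Ω₂')
    (f : Mor Ω₁ Ω₁') (g : Mor Ω₂ Ω₂') : Mor (oUnion Ω₁ Ω₂) (oUnion Ω₁' Ω₂') :=
  fun i => finsetUnionEquiv (h i) (h' i) (f i) (g i)

/-- A composition operator `Η` for the species `F`: a natural transformation from
`F × F` (on pairs of componentwise disjoint objects) to `F ∘ ⨿` with injective
components, satisfying Axiom (D1). -/
structure CompOp {r : ℕ} (F : Species r) where
  η : Obj r → Obj r → ℕ × ℕ → ℕ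
  mem_η : ∀ {Ω₁ Ω₂ : Obj r}, oDisj Ω₁ Ω₂ → ∀ x ∈ F.obj Ω₁, ∀ y ∈ F.obj Ω₂,
    η Ω₁ Ω₂ (x, y) ∈ F.obj (oUnion Ω₁ Ω₂)
  inj_η : ∀ {Ω₁ Ω₂ : Obj r}, oDisj Ω₁ Ω₂ →
    Set.InjOn (η Ω₁ Ω₂) ((F.obj Ω₁ : Set ℕ) ×ˢ (F.obj Ω₂ : Set ℕ))
  natural : ∀ {Ω₁ Ω₂ Ω₁' Ω₂' : Obj r} (h : oDisj Ω₁ Ω₂) (h' : oDisj Ω₁' Ω₂')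
    (f : Mor Ω₁ Ω₁') (g : Mor Ω₂ Ω₂'), ∀ x ∈ F.obj Ω₁, ∀ y ∈ F.obj Ω₂,
    F.map (morUnion h h' f g) (η Ω₁ Ω₂ (x, y)) = η Ω₁' Ω₂' (F.map f x, F.map g y)
  D1 : ∀ {Ω₁ Ω₂ Ω₃ Ω₄ : Obj r}, oDisj Ω₁ Ω₂ → oDisj Ω₃ Ω₄ →
    oUnion Ω₁ Ω₂ = oUnion Ω₃ Ω₄ →
    η Ω₁ Ω₂ '' ((F.obj Ω₁ : Set ℕ) ×ˢ (F.obj Ω₂ : Set ℕ)) ∩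
      η Ω₃ Ω₄ '' ((F.obj Ω₃ : Set ℕ) ×ˢ (F.obj Ω₄ : Set ℕ)) =
    η Ω₁ Ω₂ ''
      ((η (oInter Ω₁ Ω₃) (oInter Ω₁ Ω₄) ''
          ((F.obj (oInter Ω₁ Ω₃) : Set ℕ) ×ˢ (F.obj (oInter Ω₁ Ω₄) : Set ℕ))) ×ˢ
        (η (oInter Ω₂ Ω₃) (oInter Ω₂ Ω₄) ''
          ((F.obj (oInter Ω₂ Ω₃) : Set ℕ) ×ˢ (F.obj (oInter Ω₂ Ω₄) : Set ℕ))))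

/-- The set `F_Η[Ω]` of indecomposable elements of `F[Ω]`. -/
def indec (F : Species r) (E : CompOp F) (Ω : Obj r) : Set ℕ :=
  if Ω = oEmpty r then ∅
  else (F.obj Ω : Set ℕ) \
    ⋃ (p : Obj r × Obj r) (_ : oDisj p.1 p.2) (_ : p.1 ≠ oEmpty r) (_ : p.2 ≠ oEmpty r)
      (_ : oUnion p.1 p.2 = Ω),
      E.η p.1 p.2 '' ((F.obj p.1 : Set ℕ) ×ˢ (F.obj p.2 : Set ℕ))

/-- The sets `F_Η^(k)[Ω]` of elements of `F[Ω]` consisting of exactly `k`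
indecomposable components. -/
def indecK (F : Species r) (E : CompOp F) : ℕ → Obj r → Set ℕ
  | 0 => fun Ω => if Ω = oEmpty r then (F.obj (oEmpty r) : Set ℕ) else ∅
  | (k + 1) => fun Ω => ⋃ (Ω₁ : Obj r) (_ : oSub Ω₁ Ω),
      E.η Ω₁ (oDiff Ω Ω₁) '' ((indec F E Ω₁) ×ˢ (indecK F E k (oDiff Ω Ω₁)))

/-- `Ω_I`: the componentwise disjoint union of the family `Ωs` over the index set `s`. -/
def bigU {ι : Type} [DecidableEq ι] (Ωs : ι → Obj r) (s : Finset ι) : Obj r :=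
  fun i => s.biUnion (fun j => Ωs j i)

/-- `Brack F E Ωs leaf s B` says that `B` is an `Η`-bracketing of the sets
`leaf (Ωs i)`, `i ∈ s` (each occurring exactly once).  For `leaf Ω = F[Ω]` this is an
`Η`-bracketing of the `F[Ωs i]`; for `leaf = indec F E` it is an `Η`-bracketing of
the `F_Η[Ωs i]`. -/
inductive Brack (F : Species r) (E : CompOp F) {ι : Type} [DecidableEq ι]
    (Ωs : ι → Obj r) (leaf : Obj r → Set ℕ) : Finset ι → Set ℕ → Prop
  | single (i : ι) : Brack F E Ωs leaf {i} (leaf (Ωs i))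
  | node {s t : Finset ι} {B₁ B₂ : Set ℕ} :
      Disjoint s t → s.Nonempty → t.Nonempty →
      Brack F E Ωs leaf s B₁ → Brack F E Ωs leaf t B₂ →
      Brack F E Ωs leaf (s ∪ t) (E.η (bigU Ωs s) (bigU Ωs t) '' (B₁ ×ˢ B₂))

/-- A `Λ`-weight on `(F, Η)`: Axioms (W0), (W1), (W2). -/
structure Weight {r : ℕ} (F : Species r) (E : CompOp F) (Λ : Type) [CommRing Λ]
    [Algebra ℚ Λ] where
  w : Obj r → ℕ → Λ
  W0 : ∀ x ∈ F.obj (oEmpty r), w (oEmpty r) x = 1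
  W1 : ∀ {Ω Ω' : Obj r} (f : Mor Ω Ω'), ∀ x ∈ F.obj Ω, w Ω' (F.map f x) = w Ω x
  W2 : ∀ {Ω₁ Ω₂ : Obj r}, oDisj Ω₁ Ω₂ → ∀ x ∈ indec F E Ω₁, ∀ y ∈ F.obj Ω₂,
    w (oUnion Ω₁ Ω₂) (E.η Ω₁ Ω₂ (x, y)) = w Ω₁ x * w Ω₂ y

/-- The standard object `([n₁], …, [n_r])`, with `[n] = {1, …, n}`. -/
def stdObj {r : ℕ} (n : Fin r → ℕ) : Obj r := fun i => Finset.Icc 1 (n i)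

/-- The exponential generating function
`Σ_{n₁,…,n_r ≥ 0} Σ_{x ∈ S[([n₁],…,[n_r])]} w(x) z₁^{n₁} ⋯ z_r^{n_r}/(n₁! ⋯ n_r!)`
of a subfamily `S` of a species `F`, with respect to a weight `w`. -/
def GF {r : ℕ} {Λ : Type} [CommRing Λ] [Algebra ℚ Λ] (F : Species r)
    (S : Obj r → Set ℕ) (w : Obj r → ℕ → Λ) : MvPowerSeries (Fin r) Λ :=
  fun d => (algebraMap ℚ Λ (∏ i, (1 / (Nat.factorial (d i)) : ℚ))) *
    ∑ x ∈ (F.obj (stdObj fun i => d i)).filter (fun x => x ∈ S (stdObj fun i => d i)),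
      w (stdObj fun i => d i) x

/-- The exponential `exp f = Σ_{k ≥ 0} f^k / k!` of a multivariate formal power
series `f` with zero constant term (the coefficient of a given monomial only
receives contributions from `k` at most the total degree). -/
def mvExp {σ Λ : Type} [CommRing Λ] [Algebra ℚ Λ] (f : MvPowerSeries σ Λ) :
    MvPowerSeries σ Λ :=
  fun d => ∑ k ∈ Finset.range ((d.sum fun _ m => m) + 1),
    algebraMap ℚ Λ ((1 : ℚ) / (Nat.factorial k)) * MvPowerSeries.coeff d (f ^ k)

/-- The logarithm `log f = Σ_{k ≥ 1} (-1)^{k+1} (f-1)^k / k` of a multivariate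
formal power series `f` with constant term `1`. -/
def mvLog {σ Λ : Type} [CommRing Λ] [Algebra ℚ Λ] (f : MvPowerSeries σ Λ) :
    MvPowerSeries σ Λ :=
  fun d => ∑ k ∈ Finset.Icc 1 (d.sum fun _ m => m),
    algebraMap ℚ Λ ((-1 : ℚ) ^ (k + 1) / k) * MvPowerSeries.coeff d ((f - 1) ^ k)

/-- The refined generating function `G̃F_F(z₁,…,z_r,y)`, a power series in
`z₁, …, z_r` with coefficients that are polynomials in `y` (recorded via
`Polynomial Λ`, the variable `y` being `Polynomial.X`):
`Σ_{n₁,…,n_r ≥ 0} Σ_k Σ_{x ∈ F_Η^(k)[([n₁],…,[n_r])]} y^k w(x) z₁^{n₁}⋯z_r^{n_r}/(n₁!⋯n_r!)`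
(for fixed `n₁, …, n_r` only the `k ≤ n₁ + ⋯ + n_r` contribute, since
`F_Η^(k)[Ω] = ∅ for k > ‖Ω‖`). -/
def tGF {r : ℕ} {Λ : Type} [CommRing Λ] [Algebra ℚ Λ] (F : Species r) (E : CompOp F)
    (w : Obj r → ℕ → Λ) : MvPowerSeries (Fin r) (Polynomial Λ) :=
  fun d => Polynomial.C (algebraMap ℚ Λ (∏ i, (1 / (Nat.factorial (d i)) : ℚ))) *
    ∑ k ∈ Finset.range ((∑ i, d i) + 1), Polynomial.X ^ k *
      Polynomial.C (∑ x ∈ (F.obj (stdObj fun i => d i)).filter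
          (fun x => x ∈ indecK F E k (stdObj fun i => d i)),
        w (stdObj fun i => d i) x)

/-- The species `E(F_Η)` of sets of `F_Η`-structures:  `E(F_Η)[Ω]` consists of all
finite sets `{(x₁,Ω₁),…,(x_k,Ω_k)}` with `x_i ∈ F_Η[Ω_i]`, the `Ω_i` nonempty and
pairwise componentwise disjoint, and `Ω₁ ⨿ ⋯ ⨿ Ω_k = Ω`. -/
def ESet {r : ℕ} (F : Species r) (E : CompOp F) (Ω : Obj r) :
    Set (Finset (ℕ × Obj r)) :=
  { s | (∀ p ∈ s, p.1 ∈ indec F E p.2 ∧ p.2 ≠ oEmpty r) ∧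
        (∀ p ∈ s, ∀ q ∈ s, p ≠ q → oDisj p.2 q.2) ∧
        (∀ i, Ω i = s.biUnion (fun p => p.2 i)) }

/-- The bijection between a finite set and its image under a map injective on it. -/
def imageEquiv {u : Finset ℕ} (g : ℕ → ℕ) (hg : Set.InjOn g (u : Set ℕ)) :
    {x // x ∈ u} ≃ {x // x ∈ u.image g} :=
  Equiv.ofBijective (fun x => ⟨g x, Finset.mem_image_of_mem g x.2⟩) (by
    constructor
    · rintro ⟨a, ha⟩ ⟨b, hb⟩ hab
      exact Subtype.ext (hg (by exact_mod_cast ha) (by exact_mod_cast hb)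
        (congrArg Subtype.val hab))
    · rintro ⟨y, hy⟩
      rcases Finset.mem_image.mp hy with ⟨a, ha, rfl⟩
      exact ⟨⟨a, ha⟩, rfl⟩)

/-- The underlying function `ℕ → ℕ` of the `i`-th component of a morphism. -/
def apMor {Ω Ω' : Obj r} (f : Mor Ω Ω') (i : Fin r) (a : ℕ) : ℕ :=
  if h : a ∈ Ω i then ((f i) ⟨a, h⟩ : ℕ) else a

/-- The componentwise image of a subobject `O ⊆ Ω` under a morphism `f : Ω → Ω'`. -/
def oImage {Ω Ω' : Obj r} (f : Mor Ω Ω') (O : Obj r) : Obj r :=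
  fun i => (O i).image (apMor f i)

/-- The restriction of a morphism `f : Ω → Ω'` to a subobject `O ⊆ Ω`. -/
def restrictMor {Ω Ω' : Obj r} (f : Mor Ω Ω') {O : Obj r} (hO : oSub O Ω) :
    Mor O (oImage f O) :=
  fun i => imageEquiv (apMor f i) (by
    intro a ha b hb hab
    have ha' : a ∈ Ω i := hO i (by exact_mod_cast ha)
    have hb' : b ∈ Ω i := hO i (by exact_mod_cast hb)
    have h1 : ((f i) ⟨a, ha'⟩ : ℕ) = ((f i) ⟨b, hb'⟩ : ℕ) := by
      simpa [apMor, dif_pos ha', dif_pos hb'] using hab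
    have h2 := (f i).injective (Subtype.ext h1)
    exact congrArg Subtype.val h2)

/-- The induced action of a morphism `f : Ω → Ω'` on `E(F_Η)[Ω]`. -/
def Emap {r : ℕ} (F : Species r) {Ω Ω' : Obj r} (f : Mor Ω Ω')
    (s : Finset (ℕ × Obj r)) : Finset (ℕ × Obj r) :=
  s.image (fun p =>
    if h : oSub p.2 Ω then (F.map (restrictMor f h) p.1, oImage f p.2) else p)

/-!
The empty tuple acts as a unit: (D1) for a decomposition `P ⨿ Q` against itself, with `η`
cancelled by injectivity, gives `F[P] × F[Q] = η(F[P] × F[∅]) × η(F[∅] × F[Q])`.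
Both sides of the associativity law are then the intersection of `η(F[Ω₁ ⨿ Ω₂] × F[Ω₃])` and
`η(F[Ω₁] × F[Ω₂ ⨿ Ω₃])`: apply (D1) to these two decompositions of `Ω₁ ⨿ Ω₂ ⨿ Ω₃`, in either
order, and absorb the empty factors.
-/

lemma oUnion_assoc (Ω₁ Ω₂ Ω₃ : Obj r) :
    oUnion (oUnion Ω₁ Ω₂) Ω₃ = oUnion Ω₁ (oUnion Ω₂ Ω₃) :=
  funext fun _ => Finset.union_assoc _ _ _

lemma oUnion_oEmpty (Ω : Obj r) : oUnion Ω (oEmpty r) = Ω :=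
  funext fun _ => Finset.union_empty _

lemma oEmpty_oUnion (Ω : Obj r) : oUnion (oEmpty r) Ω = Ω :=
  funext fun _ => Finset.empty_union _

lemma oDisj_oEmpty_right (Ω : Obj r) : oDisj Ω (oEmpty r) :=
  fun _ => Finset.disjoint_empty_right _

lemma oDisj_oEmpty_left (Ω : Obj r) : oDisj (oEmpty r) Ω :=
  fun _ => Finset.disjoint_empty_left _

lemma oDisj.symm {Ω₁ Ω₂ : Obj r} (h : oDisj Ω₁ Ω₂) : oDisj Ω₂ Ω₁ :=
  fun i => (h i).symm

lemma oDisj_oUnion_left {Ω₁ Ω₂ Ω₃ : Obj r} (h₁ : oDisj Ω₁ Ω₃) (h₂ : oDisj Ω₂ Ω₃) :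
    oDisj (oUnion Ω₁ Ω₂) Ω₃ :=
  fun i => Finset.disjoint_union_left.mpr ⟨h₁ i, h₂ i⟩

lemma oDisj_oUnion_right {Ω₁ Ω₂ Ω₃ : Obj r} (h₂ : oDisj Ω₁ Ω₂) (h₃ : oDisj Ω₁ Ω₃) :
    oDisj Ω₁ (oUnion Ω₂ Ω₃) :=
  fun i => Finset.disjoint_union_right.mpr ⟨h₂ i, h₃ i⟩

lemma oInter_comm (Ω₁ Ω₂ : Obj r) : oInter Ω₁ Ω₂ = oInter Ω₂ Ω₁ :=
  funext fun _ => Finset.inter_comm _ _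

lemma oInter_self (Ω : Obj r) : oInter Ω Ω = Ω :=
  funext fun _ => Finset.inter_self _

lemma oInter_eq_oEmpty {Ω₁ Ω₂ : Obj r} (h : oDisj Ω₁ Ω₂) : oInter Ω₁ Ω₂ = oEmpty r :=
  funext fun i => Finset.disjoint_iff_inter_eq_empty.mp (h i)

lemma oInter_oUnion_cancel_left (Ω₁ Ω₂ : Obj r) : oInter (oUnion Ω₁ Ω₂) Ω₁ = Ω₁ :=
  funext fun _ => Finset.union_inter_cancel_left

lemma oInter_oUnion_cancel_right (Ω₁ Ω₂ : Obj r) : oInter (oUnion Ω₁ Ω₂) Ω₂ = Ω₂ :=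
  funext fun _ => Finset.union_inter_cancel_right

lemma oInter_oUnion_oUnion {Ω₁ Ω₂ Ω₃ : Obj r} (h : oDisj Ω₁ Ω₃) :
    oInter (oUnion Ω₁ Ω₂) (oUnion Ω₂ Ω₃) = Ω₂ := by
  funext i
  rw [oInter, oUnion, oUnion, Finset.union_comm (Ω₁ i), ← Finset.union_inter_distrib_left,
    Finset.disjoint_iff_inter_eq_empty.mp (h i), Finset.union_empty]

section

variable {F : Species r} (E : CompOp F)

lemma image_η_subset_obj {P Q : Obj r} (h : oDisj P Q) :
    E.η P Q '' ((F.obj P : Set ℕ) ×ˢ (F.obj Q : Set ℕ)) ⊆ F.obj (oUnion P Q) := by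
  rintro _ ⟨⟨x, y⟩, ⟨hx, hy⟩, rfl⟩
  exact E.mem_η h x hx y hy

lemma obj_prod_eq_prod_image_η_oEmpty {P Q : Obj r} (h : oDisj P Q) :
    (F.obj P : Set ℕ) ×ˢ (F.obj Q : Set ℕ) =
      (E.η P (oEmpty r) '' ((F.obj P : Set ℕ) ×ˢ (F.obj (oEmpty r) : Set ℕ))) ×ˢ
        (E.η (oEmpty r) Q '' ((F.obj (oEmpty r) : Set ℕ) ×ˢ (F.obj Q : Set ℕ))) := by
  have hD1 := E.D1 h h rfl
  rw [Set.inter_self, oInter_self, oInter_self, oInter_eq_oEmpty h,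
    oInter_eq_oEmpty h.symm] at hD1
  refine ((E.inj_η h).image_eq_image_iff subset_rfl (Set.prod_mono ?_ ?_)).mp hD1
  · simpa only [oUnion_oEmpty] using image_η_subset_obj E (oDisj_oEmpty_right P)
  · simpa only [oEmpty_oUnion] using image_η_subset_obj E (oDisj_oEmpty_left Q)

lemma image_η_oEmpty_left {P Q : Obj r} (h : oDisj P Q) (hP : (F.obj P).Nonempty) :
    E.η (oEmpty r) Q '' ((F.obj (oEmpty r) : Set ℕ) ×ˢ (F.obj Q : Set ℕ)) = F.obj Q := by
  refine subset_antisymm ?_ fun y hy => ?_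
  · simpa only [oEmpty_oUnion] using image_η_subset_obj E (oDisj_oEmpty_left Q)
  · obtain ⟨x, hx⟩ := hP
    have hxy : (x, y) ∈ (F.obj P : Set ℕ) ×ˢ (F.obj Q : Set ℕ) := ⟨hx, hy⟩
    rw [obj_prod_eq_prod_image_η_oEmpty E h] at hxy
    exact hxy.2

lemma image_η_oEmpty_right {P Q : Obj r} (h : oDisj P Q) (hQ : (F.obj Q).Nonempty) :
    E.η P (oEmpty r) '' ((F.obj P : Set ℕ) ×ˢ (F.obj (oEmpty r) : Set ℕ)) = F.obj P := by
  refine subset_antisymm ?_ fun x hx => ?_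
  · simpa only [oUnion_oEmpty] using image_η_subset_obj E (oDisj_oEmpty_right P)
  · obtain ⟨y, hy⟩ := hQ
    have hxy : (x, y) ∈ (F.obj P : Set ℕ) ×ˢ (F.obj Q : Set ℕ) := ⟨hx, hy⟩
    rw [obj_prod_eq_prod_image_η_oEmpty E h] at hxy
    exact hxy.1

lemma prod_image_η_oEmpty_left {P Q : Obj r} (h : oDisj P Q) {M : Set ℕ}
    (hM : M ⊆ F.obj P) :
    M ×ˢ (E.η (oEmpty r) Q '' ((F.obj (oEmpty r) : Set ℕ) ×ˢ (F.obj Q : Set ℕ))) =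
      M ×ˢ (F.obj Q : Set ℕ) := by
  rcases M.eq_empty_or_nonempty with rfl | ⟨x, hx⟩
  · simp only [Set.empty_prod]
  · rw [image_η_oEmpty_left E h ⟨x, hM hx⟩]

lemma image_η_oEmpty_prod_right {P Q : Obj r} (h : oDisj P Q) {N : Set ℕ}
    (hN : N ⊆ F.obj Q) :
    (E.η P (oEmpty r) '' ((F.obj P : Set ℕ) ×ˢ (F.obj (oEmpty r) : Set ℕ))) ×ˢ N =
      (F.obj P : Set ℕ) ×ˢ N := by
  rcases N.eq_empty_or_nonempty with rfl | ⟨y, hy⟩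
  · simp only [Set.prod_empty]
  · rw [image_η_oEmpty_right E h ⟨y, hN hy⟩]

end

theorem stmt2_general {r : ℕ} (F : Species r) (E : CompOp F)
    (Ω₁ Ω₂ Ω₃ : Obj r) (h12 : oDisj Ω₁ Ω₂) (h13 : oDisj Ω₁ Ω₃) (h23 : oDisj Ω₂ Ω₃) :
    E.η (oUnion Ω₁ Ω₂) Ω₃ ''
        ((E.η Ω₁ Ω₂ '' ((F.obj Ω₁ : Set ℕ) ×ˢ (F.obj Ω₂ : Set ℕ))) ×ˢ (F.obj Ω₃ : Set ℕ)) =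
      E.η Ω₁ (oUnion Ω₂ Ω₃) ''
        ((F.obj Ω₁ : Set ℕ) ×ˢ (E.η Ω₂ Ω₃ '' ((F.obj Ω₂ : Set ℕ) ×ˢ (F.obj Ω₃ : Set ℕ)))) := by
  have h12_3 := oDisj_oUnion_left h13 h23
  have h1_23 := oDisj_oUnion_right h12 h13
  have hassoc := oUnion_assoc Ω₁ Ω₂ Ω₃
  have hleft := E.D1 h12_3 h1_23 hassoc
  rw [oInter_oUnion_cancel_left, oInter_oUnion_oUnion h13, oInter_eq_oEmpty h13.symm,
    oInter_comm Ω₃, oInter_oUnion_cancel_right,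
    prod_image_η_oEmpty_left E h12_3 (image_η_subset_obj E h12)] at hleft
  have hright := E.D1 h1_23 h12_3 hassoc.symm
  rw [oInter_comm Ω₁, oInter_oUnion_cancel_left, oInter_eq_oEmpty h13,
    oInter_comm (oUnion Ω₂ Ω₃), oInter_oUnion_oUnion h13, oInter_oUnion_cancel_right,
    image_η_oEmpty_prod_right E h1_23 (image_η_subset_obj E h23)] at hright
  rw [← hleft, ← hright, Set.inter_comm]

/-- 3-Associativity for `(F, Η)`. -/
theorem stmt2 {r : ℕ} (hr : 0 < r) (F : Species r) (E : CompOp F)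
    (hF : ∃ Ω : Obj r, (F.obj Ω).Nonempty)
    (Ω₁ Ω₂ Ω₃ : Obj r) (h12 : oDisj Ω₁ Ω₂) (h13 : oDisj Ω₁ Ω₃) (h23 : oDisj Ω₂ Ω₃) :
    E.η (oUnion Ω₁ Ω₂) Ω₃ ''
        ((E.η Ω₁ Ω₂ '' ((F.obj Ω₁ : Set ℕ) ×ˢ (F.obj Ω₂ : Set ℕ))) ×ˢ (F.obj Ω₃ : Set ℕ)) =
      E.η Ω₁ (oUnion Ω₂ Ω₃) ''
        ((F.obj Ω₁ : Set ℕ) ×ˢ (E.η Ω₂ Ω₃ '' ((F.obj Ω₂ : Set ℕ) ×ˢ (F.obj Ω₃ : Set ℕ)))) :=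
  stmt2_general F E Ω₁ Ω₂ Ω₃ h12 h13 h23

end
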